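/- Under the hypotheses of the generalized lopsided Lovász local lemma (constant c ≥ 1, numbers x_i ∈ [0,1/c) satisfying P(A_i | ⋀_{j∈S} A_j^c) ≤ c·P(A_i) for all S ⊆ [n]\(Γ(i)∪{i}) and P(A_i) ≤ x_i ∏_{j∈Γ(i)}(1 − c x_j)), one has the key inductive estimate: for every index i and every S ⊆ [n] with i ∉ S, P(A_i | ⋀_{j∈S} A_j^c) ≤ c·x_i. -/

import Mathlib

/-!
Strong induction on `S`. Split `S` into `R = S \ Γ i` and `T = S ∩ Γ i`. Forgetting `T` only
enlarges the numerator, and lopsidedness bounds `P(A i ∩ ⋂_R Aᶜ)` by `c P(A i) P(⋂_R Aᶜ)`.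
Adding the events of `T` one at a time, the chain rule and the induction hypothesis (applied to
proper subsets of `S`) give `P(⋂_S Aᶜ) ≥ ∏_T (1 - c x j) P(⋂_R Aᶜ)`, and this product absorbs the
factor `∏_{Γ i} (1 - c x j)` in the bound on `P(A i)`.
-/

open MeasureTheory

lemma mul_mem_Ico_of_mem_Ico_one_div {c x : ℝ} (hx : x ∈ Set.Ico 0 (1 / c)) :
    c * x ∈ Set.Ico 0 1 := by
  have hc : 0 < c := one_div_pos.1 (hx.1.trans_lt hx.2)
  exact ⟨mul_nonneg hc.le hx.1, (lt_div_iff₀' hc).1 hx.2⟩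

lemma measureReal_inter_div_le_iff {Ω : Type*} [MeasurableSpace Ω] {μ : Measure Ω}
    [IsFiniteMeasure μ] {s t : Set Ω} {a : ℝ} (ha : 0 ≤ a) :
    μ.real (s ∩ t) / μ.real t ≤ a ↔ μ.real (s ∩ t) ≤ a * μ.real t := by
  rcases (measureReal_nonneg : 0 ≤ μ.real t).eq_or_lt with ht | ht
  · -- both sides hold, the ratio being the junk value `0 / 0 = 0`
    have hst : μ.real (s ∩ t) = 0 :=
      measureReal_mono_null Set.inter_subset_right ht.symm
    simp [hst, ← ht, ha]
  · exact div_le_iff₀ ht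

section noneOf

variable {Ω ι : Type*} {A : ι → Set Ω}

variable (A) in
def noneOf (S : Finset ι) : Set Ω := ⋂ j ∈ S, (A j)ᶜ

lemma noneOf_anti {S T : Finset ι} (h : S ⊆ T) : noneOf A T ⊆ noneOf A S :=
  Set.biInter_subset_biInter_left (Finset.coe_subset.2 h)

lemma noneOf_insert [DecidableEq ι] (j : ι) (S : Finset ι) :
    noneOf A (insert j S) = noneOf A S \ A j := by
  rw [noneOf, Finset.set_biInter_insert, Set.sdiff_eq, Set.inter_comm]; rfl

variable [MeasurableSpace Ω] {μ : Measure Ω} [IsFiniteMeasure μ] [DecidableEq ι]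

lemma measureReal_noneOf_insert {j : ι} (hj : MeasurableSet (A j)) (S : Finset ι) :
    μ.real (noneOf A (insert j S)) = μ.real (noneOf A S) - μ.real (A j ∩ noneOf A S) := by
  rw [noneOf_insert, Set.inter_comm, ← measureReal_inter_add_sdiff hj (μ := μ) (s := noneOf A S)]
  ring

lemma prod_mul_measureReal_noneOf_le (hA : ∀ j, MeasurableSet (A j)) {y : ι → ℝ}
    {R T : Finset ι} (hRT : Disjoint R T) (hy : ∀ j ∈ T, y j ≤ 1)
    (hstep : ∀ j ∈ T, ∀ U ⊆ R ∪ T, j ∉ U →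
      μ.real (A j ∩ noneOf A U) ≤ y j * μ.real (noneOf A U)) :
    (∏ j ∈ T, (1 - y j)) * μ.real (noneOf A R) ≤ μ.real (noneOf A (R ∪ T)) := by
  induction T using Finset.induction_on with
  | empty => simp
  | @insert a T haT ih =>
    have haR : a ∉ R := Finset.disjoint_right.1 hRT (Finset.mem_insert_self a T)
    have hRT' : Disjoint R T := hRT.mono_right (Finset.subset_insert a T)
    have hmono : (∏ j ∈ T, (1 - y j)) * μ.real (noneOf A R) ≤ μ.real (noneOf A (R ∪ T)) :=
      ih hRT' (fun j hj => hy j (Finset.mem_insert_of_mem hj)) fun j hj U hU =>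
        hstep j (Finset.mem_insert_of_mem hj) U
          (hU.trans (Finset.union_subset_union_right (Finset.subset_insert a T)))
    have ha : μ.real (A a ∩ noneOf A (R ∪ T)) ≤ y a * μ.real (noneOf A (R ∪ T)) :=
      hstep a (Finset.mem_insert_self a T) (R ∪ T)
        (Finset.union_subset_union_right (Finset.subset_insert a T))
        (by simp [haR, haT])
    have hya : 0 ≤ 1 - y a := sub_nonneg.2 (hy a (Finset.mem_insert_self a T))
    rw [Finset.union_insert, measureReal_noneOf_insert (hA a), Finset.prod_insert haT]
    calc (1 - y a) * (∏ j ∈ T, (1 - y j)) * μ.real (noneOf A R)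
        ≤ (1 - y a) * μ.real (noneOf A (R ∪ T)) := by
          rw [mul_assoc]; exact mul_le_mul_of_nonneg_left hmono hya
      _ ≤ _ := by linarith

theorem measureReal_inter_noneOf_le (hA : ∀ j, MeasurableSet (A j)) {Γ : ι → Finset ι}
    {y z : ι → ℝ} (hy : ∀ j, y j ∈ Set.Icc 0 1)
    (hlopsided : ∀ i S, i ∉ S → Disjoint S (Γ i) →
      μ.real (A i ∩ noneOf A S) ≤ z i * μ.real (noneOf A S))
    (hz : ∀ i, z i ≤ y i * ∏ j ∈ Γ i, (1 - y j)) (S : Finset ι) :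
    ∀ i ∉ S, μ.real (A i ∩ noneOf A S) ≤ y i * μ.real (noneOf A S) := by
  induction S using Finset.strongInduction with
  | H S ih =>
  intro i hiS
  have hchain : (∏ j ∈ S ∩ Γ i, (1 - y j)) * μ.real (noneOf A (S \ Γ i))
      ≤ μ.real (noneOf A S) := by
    have := prod_mul_measureReal_noneOf_le hA (Finset.disjoint_sdiff_inter S (Γ i))
      (fun j _ => (hy j).2) fun j hj U hU hjU => by
        rw [Finset.sdiff_union_inter] at hU
        exact ih U ((Finset.ssubset_iff_of_subset hU).2 ⟨j, Finset.mem_of_mem_inter_left hj, hjU⟩)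
          j hjU
    rwa [Finset.sdiff_union_inter] at this
  have hprod : ∏ j ∈ Γ i, (1 - y j) ≤ ∏ j ∈ S ∩ Γ i, (1 - y j) :=
    Finset.prod_le_prod_of_subset_of_le_one Finset.inter_subset_right
      (fun j _ => sub_nonneg.2 (hy j).2) fun j _ _ => sub_le_self _ (hy j).1
  calc μ.real (A i ∩ noneOf A S) ≤ μ.real (A i ∩ noneOf A (S \ Γ i)) :=
        measureReal_mono (Set.inter_subset_inter_right _ (noneOf_anti Finset.sdiff_subset))
    _ ≤ z i * μ.real (noneOf A (S \ Γ i)) :=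
        hlopsided i _ (fun h => hiS (Finset.sdiff_subset h)) Finset.sdiff_disjoint
    _ ≤ y i * (∏ j ∈ S ∩ Γ i, (1 - y j)) * μ.real (noneOf A (S \ Γ i)) := by
        gcongr
        calc z i ≤ _ := hz i
          _ ≤ _ := mul_le_mul_of_nonneg_left hprod (hy i).1
    _ ≤ y i * μ.real (noneOf A S) := by
        rw [mul_assoc]; exact mul_le_mul_of_nonneg_left hchain (hy i).1

end noneOf

theorem glll_inductive_estimate_general
    {Ω : Type*} [MeasurableSpace Ω] (μ : Measure Ω) [IsProbabilityMeasure μ]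
    {n : ℕ} (A : Fin n → Set Ω) (hA : ∀ i, MeasurableSet (A i))
    (Γ : Fin n → Finset (Fin n))
    (c : ℝ) (x : Fin n → ℝ) (hx : ∀ i, x i ∈ Set.Ico (0 : ℝ) (1 / c))
    (hcond : ∀ i (S : Finset (Fin n)), i ∉ S → (∀ j ∈ S, j ∉ Γ i) →
      (μ (A i ∩ ⋂ j ∈ S, (A j)ᶜ)).toReal / (μ (⋂ j ∈ S, (A j)ᶜ)).toReal
        ≤ c * (μ (A i)).toReal)
    (hbound : ∀ i, (μ (A i)).toReal ≤ x i * ∏ j ∈ Γ i, (1 - c * x j)) :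
    ∀ i (S : Finset (Fin n)), i ∉ S →
      (μ (A i ∩ ⋂ j ∈ S, (A j)ᶜ)).toReal / (μ (⋂ j ∈ S, (A j)ᶜ)).toReal
        ≤ c * x i := by
  intro i S hiS
  have hcx : ∀ j, c * x j ∈ Set.Icc 0 1 :=
    fun j => Set.Ico_subset_Icc_self (mul_mem_Ico_of_mem_Ico_one_div (hx j))
  have hc : 0 < c := one_div_pos.1 ((hx i).1.trans_lt (hx i).2)
  have hlopsided : ∀ j T, j ∉ T → Disjoint T (Γ j) →
      μ.real (A j ∩ noneOf A T) ≤ c * μ.real (A j) * μ.real (noneOf A T) :=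
    fun j T hjT hT => (measureReal_inter_div_le_iff (by positivity)).1
      (hcond j T hjT fun _ hk => Finset.disjoint_left.1 hT hk)
  have hz : ∀ j, c * μ.real (A j) ≤ c * x j * ∏ k ∈ Γ j, (1 - c * x k) := fun j => by
    rw [mul_assoc]; exact mul_le_mul_of_nonneg_left (hbound j) hc.le
  exact (measureReal_inter_div_le_iff (hcx i).1).2
    (measureReal_inter_noneOf_le hA hcx hlopsided hz S i hiS)

/-- The key inductive estimate in the generalized lopsided Lovász local lemma:
conditioned on any collection of complements not containing `A i`, the
conditional probability of `A i` is at most `c * x i`. -/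
theorem glll_inductive_estimate
    {Ω : Type*} [MeasurableSpace Ω] (μ : Measure Ω) [IsProbabilityMeasure μ]
    {n : ℕ} (A : Fin n → Set Ω) (hA : ∀ i, MeasurableSet (A i))
    (Γ : Fin n → Finset (Fin n)) (hΓ : ∀ i, i ∉ Γ i)
    (c : ℝ) (hc : 1 ≤ c) (x : Fin n → ℝ) (hx : ∀ i, x i ∈ Set.Ico (0 : ℝ) (1 / c))
    (hcond : ∀ i (S : Finset (Fin n)), i ∉ S → (∀ j ∈ S, j ∉ Γ i) →
      (μ (A i ∩ ⋂ j ∈ S, (A j)ᶜ)).toReal / (μ (⋂ j ∈ S, (A j)ᶜ)).toReal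
        ≤ c * (μ (A i)).toReal)
    (hbound : ∀ i, (μ (A i)).toReal ≤ x i * ∏ j ∈ Γ i, (1 - c * x j)) :
    ∀ i (S : Finset (Fin n)), i ∉ S →
      (μ (A i ∩ ⋂ j ∈ S, (A j)ᶜ)).toReal / (μ (⋂ j ∈ S, (A j)ᶜ)).toReal
        ≤ c * x i :=
  glll_inductive_estimate_general μ A hA Γ c x hx hcond hbound
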